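/- Let F ∈ L_1(S). Let K, L ⊆ S be two compact nondegenerate intervals and let e ∈ S be such that (K+ℤ) ∩ (L+ℤ) ⊆ {e}+ℤ and F(e) ∉ L+ℤ. Suppose there exist k_1, k_2, k_3, k_4 ∈ ℤ such that L positively (F−k_1)-covers L, L positively (F−k_2)-covers K, K negatively (F−k_3)-covers L, and K negatively (F−k_4)-covers K. Then Per(F) ⊇ ℕ∖{2}. -/

import Mathlib

/-!
Every arc `⟨{p, q}⟩` of the tree `S` has a chart: a parametrization by an interval `[0, len]`
together with the coordinate of the retraction of `S` onto the arc, which is continuous and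
locally constant off the arc. Read in charts, a loop of oriented coverings becomes a continuous
map `Φ` of `[0, len]` covering it with its orientation, such that at each point either the true
orbit follows the loop or `Φ` is locally constant. Such a `Φ` has a fixed point at which the
orbit follows the loop: a periodic (mod 1) point with the prescribed itinerary.

The loop `L → L` gives period `1`. For `n ≥ 3`, the loop `K → K → L → ⋯ → L → K` of length `n`
gives a point `z` whose orbit returns to `z + ℤ` at time `n` and not before: an earlier return
would put `F z` in `(K + ℤ) ∩ (L + ℤ) ⊆ e + ℤ`, and then `F e` in `L + ℤ`.
-/

open Set Filter Function

noncomputable section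

/-- The real axis in `ℂ`. -/
def realAxis : Set ℂ := {z : ℂ | z.im = 0}

/-- The union of the branches of `S`. -/
def branches : Set ℂ := {z : ℂ | (∃ m : ℤ, z.re = (m : ℝ)) ∧ z.im ∈ Set.Icc (0 : ℝ) 1}

/-- The universal covering `S = ℝ ∪ B` of the space `σ`. -/
def Sspace : Set ℂ := realAxis ∪ branches

/-- The branch `B_m`. -/
def branch (m : ℤ) : Set ℂ := {z : ℂ | z.re = (m : ℝ) ∧ z.im ∈ Set.Icc (0 : ℝ) 1}

/-- `F` is a continuous self-map of `S` of degree `d`, i.e. `F ∈ L_d(S)`. -/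
def DegMap (d : ℤ) (F : ℂ → ℂ) : Prop :=
  Set.MapsTo F Sspace Sspace ∧ ContinuousOn F Sspace ∧
    ∀ z ∈ Sspace, F (z + 1) = F z + (d : ℂ)

/-- `z` is a periodic (mod 1) point of `F` of period `n`. -/
def IsPeriodicMod1 (F : ℂ → ℂ) (z : ℂ) (n : ℕ) : Prop :=
  0 < n ∧ (∃ k : ℤ, F^[n] z = z + (k : ℂ)) ∧
    ∀ i : ℕ, 0 < i → i < n → ∀ k : ℤ, F^[i] z ≠ z + (k : ℂ)

/-- The set `Per(F)` of periods (mod 1) of `F`. -/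
def PerSet (F : ℂ → ℂ) : Set ℕ := {n : ℕ | ∃ z ∈ Sspace, IsPeriodicMod1 F z n}

/-- `x` is a true periodic point of `G` of least period `n`. -/
def IsTruePeriodic (G : ℂ → ℂ) (x : ℂ) (n : ℕ) : Prop :=
  0 < n ∧ G^[n] x = x ∧ ∀ i : ℕ, 0 < i → i < n → G^[i] x ≠ x

/-- The rotation number of `z` under `F` is `ρ`. -/
def HasRotNum (F : ℂ → ℂ) (z : ℂ) (ρ : ℝ) : Prop :=
  Filter.Tendsto (fun n : ℕ => ((F^[n] z).re - z.re) / (n : ℝ)) Filter.atTop (nhds ρ)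

/-- `Rot_ℝ(F)`. -/
def RotR (F : ℂ → ℂ) : Set ℝ := {ρ : ℝ | ∃ x : ℝ, HasRotNum F (x : ℂ) ρ}

/-- `Rot(F)`. -/
def RotSet (F : ℂ → ℂ) : Set ℝ := {ρ : ℝ | ∃ z ∈ Sspace, HasRotNum F z ρ}

/-- `Per(α, F)`: periods (mod 1) of points with rotation number `α`. -/
def PerRot (F : ℂ → ℂ) (α : ℝ) : Set ℕ :=
  {n : ℕ | ∃ z ∈ Sspace, IsPeriodicMod1 F z n ∧ HasRotNum F z α}

/-- The Sharkovsky ordering `a ≤_Sh b`. -/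
def sharkLe (a b : ℕ) : Prop :=
  if ordCompl[2] a = 1 then
    (if ordCompl[2] b = 1 then a.factorization 2 ≤ b.factorization 2 else True)
  else
    ordCompl[2] b ≠ 1 ∧ (b.factorization 2 < a.factorization 2 ∨
      (b.factorization 2 = a.factorization 2 ∧ ordCompl[2] b ≤ ordCompl[2] a))

/-- The initial segment `Shs(s)` of the Sharkovsky ordering. -/
def Shs (s : ℕ) : Set ℕ := {k : ℕ | 0 < k ∧ sharkLe k s}

/-- Initial segments of the Sharkovsky ordering: either `Shs(s)` for some `s ∈ ℕ`,
or the set of all powers of `2` (corresponding to the symbol `2^∞`). -/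
def ShInitialSeg (E : Set ℕ) : Prop :=
  (∃ s : ℕ, 0 < s ∧ E = Shs s) ∨ E = {k : ℕ | ∃ i : ℕ, k = 2 ^ i}

/-- `M(c, d)`. -/
def Mset (c d : ℝ) : Set ℕ :=
  {n : ℕ | 0 < n ∧ ∃ k : ℤ, c < (k : ℝ) / (n : ℝ) ∧ (k : ℝ) / (n : ℝ) < d}

/-- `Λ(ρ, E)`. -/
def Lam (ρ : ℝ) (E : Set ℕ) : Set ℕ :=
  {m : ℕ | ∃ k : ℤ, ∃ n : ℕ, 0 < n ∧ Int.gcd k (n : ℤ) = 1 ∧ ρ = (k : ℝ) / (n : ℝ) ∧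
    ∃ q ∈ E, m = n * q}

/-- The lifted orbit of `z` under `F`. -/
def LOrb (F : ℂ → ℂ) (z : ℂ) : Set ℂ :=
  {w : ℂ | ∃ n : ℕ, ∃ k : ℤ, w = F^[n] z + (k : ℂ)}

/-- The convex hull of `A` in `S`: the smallest closed connected subset of `S`
containing `A`. -/
def sHull (A : Set ℂ) : Set ℂ :=
  ⋂₀ {C : Set ℂ | A ⊆ C ∧ C ⊆ Sspace ∧ IsClosed C ∧ IsConnected C}

/-- Compact nondegenerate intervals of `S`. -/
def IsCNInterval (I : Set ℂ) : Prop :=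
  ∃ a b : ℂ, a ∈ Sspace ∧ b ∈ Sspace ∧ a ≠ b ∧ I = sHull {a, b}

/-- `I` `G`-covers `J`: there is a subinterval `I' ⊆ I` with `G(I') = J`. -/
def Covers (G : ℂ → ℂ) (I J : Set ℂ) : Prop :=
  ∃ a b : ℂ, a ∈ I ∧ b ∈ I ∧ sHull {a, b} ⊆ I ∧ G '' sHull {a, b} = J

/-- The interior of `K` relative to the subspace `S`. -/
def relInterior (K : Set ℂ) : Set ℂ := {z ∈ Sspace | K ∈ nhdsWithin z Sspace}

/-- The map `F_0 : S → B_0`, `F_0(z) = F(z) − Re(F(z))`. -/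
def Fzero (F : ℂ → ℂ) (z : ℂ) : ℂ := F z - ((F z).re : ℂ)

/-- The set `A + ℤ` of integer translates of `A`. -/
def trZ (A : Set ℂ) : Set ℂ := {w : ℂ | ∃ z ∈ A, ∃ k : ℤ, w = z + (k : ℂ)}

/-- `(I, <_I)` positively `G`-covers `(J, <_J)`, where `I` is the oriented interval with
endpoints `a = min I`, `b = max I`, and `J` the oriented interval with endpoints
`c = min J`, `d = max J`; the order along `I` is: `x ≤_I y` iff `x ∈ ⟨{a, y}⟩`. -/
def PosCovers (G : ℂ → ℂ) (a b c d : ℂ) : Prop :=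
  ∃ x y : ℂ, x ∈ sHull {a, b} ∧ y ∈ sHull {a, b} ∧ x ∈ sHull {a, y} ∧ G x = c ∧ G y = d

/-- `(I, <_I)` negatively `G`-covers `(J, <_J)`. -/
def NegCovers (G : ℂ → ℂ) (a b c d : ℂ) : Prop := PosCovers G a b d c

/-- A concrete 3-star `X₃ ⊆ ℂ` with branching point `0`: the union of the three
segments `[-1,0]`, `[0,1]` and `[0,i]`. -/
def star3 : Set ℂ :=
  {z : ℂ | z.im = 0 ∧ z.re ∈ Set.Icc (-1 : ℝ) 1} ∪
    {z : ℂ | z.re = 0 ∧ z.im ∈ Set.Icc (0 : ℝ) 1}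

/-- `TPer(f)`: the set of least periods of the periodic points of `f` in `X`. -/
def TPer (f : ℂ → ℂ) (X : Set ℂ) : Set ℕ :=
  {n : ℕ | ∃ x ∈ X, IsTruePeriodic f x n}

open Classical in
/-- The taxicab distance on `S`. -/
def sDist (x y : ℂ) : ℝ :=
  if (∃ m : ℤ, x.re = (m : ℝ) ∧ y.re = (m : ℝ)) ∧
      x.im ∈ Set.Icc (0 : ℝ) 1 ∧ y.im ∈ Set.Icc (0 : ℝ) 1 then
    |x.im - y.im|
  else |x.im| + |x.re - y.re| + |y.im|

open Topology

/-! ### The space `S` -/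

lemma mem_Sspace_iff {z : ℂ} :
    z ∈ Sspace ↔ z.im = 0 ∨ (∃ m : ℤ, z.re = m) ∧ 0 ≤ z.im ∧ z.im ≤ 1 := by
  simp [Sspace, realAxis, branches]

lemma Int.eq_of_abs_cast_sub_lt_one {m n : ℤ} (h : |(m : ℝ) - n| < 1) : m = n := by
  rw [← sub_eq_zero, ← Int.abs_lt_one_iff]
  exact_mod_cast h

namespace Sspace

variable {z w : ℂ}

lemma im_nonneg (hz : z ∈ Sspace) : 0 ≤ z.im := by
  rcases mem_Sspace_iff.1 hz with h | h
  · exact h.ge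
  · exact h.2.1

lemma im_le_one (hz : z ∈ Sspace) : z.im ≤ 1 := by
  rcases mem_Sspace_iff.1 hz with h | h
  · rw [h]; exact zero_le_one
  · exact h.2.2

lemma exists_int_re (hz : z ∈ Sspace) (h : 0 < z.im) : ∃ m : ℤ, z.re = m :=
  ((mem_Sspace_iff.1 hz).resolve_left h.ne').1

lemma add_int_mem (hz : z ∈ Sspace) (k : ℤ) : z + k ∈ Sspace := by
  rcases mem_Sspace_iff.1 hz with h | ⟨⟨m, hm⟩, h0, h1⟩
  · exact mem_Sspace_iff.2 (Or.inl (by simp [h]))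
  · exact mem_Sspace_iff.2 (Or.inr ⟨⟨m + k, by simp [hm]⟩, by simpa using h0, by simpa using h1⟩)

lemma sub_int_mem (hz : z ∈ Sspace) (k : ℤ) : z - k ∈ Sspace := by
  simpa [sub_eq_add_neg] using add_int_mem hz (-k)

lemma re_eq_of_abs_sub_lt_one (hw : w ∈ Sspace) (him : 0 < w.im) {m : ℤ}
    (h : |w.re - m| < 1) : w.re = m := by
  obtain ⟨n, hn⟩ := exists_int_re hw him
  rw [hn] at h ⊢
  rw [Int.eq_of_abs_cast_sub_lt_one h]

lemma eventually_re_eq (hw : w ∈ Sspace) (him : 0 < w.im) :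
    ∀ᶠ w' in 𝓝[Sspace] w, w'.re = w.re := by
  obtain ⟨m, hm⟩ := exists_int_re hw him
  have him' : ∀ᶠ w' in 𝓝[Sspace] w, 0 < w'.im :=
    Filter.Tendsto.eventually_const_lt him Complex.continuous_im.continuousWithinAt
  have hre : ∀ᶠ w' in 𝓝[Sspace] w, |w'.re - (m : ℝ)| < 1 :=
    Filter.Tendsto.eventually_lt_const (by simp [hm])
      ((Complex.continuous_re.sub continuous_const).abs.continuousWithinAt :
        ContinuousWithinAt (fun w' : ℂ => |w'.re - (m : ℝ)|) Sspace w)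
  filter_upwards [him', hre, self_mem_nhdsWithin] with w' h1 h2 hS
  rw [re_eq_of_abs_sub_lt_one hS h1 h2, hm]

lemma mem_of_re_eq_of_im_le {x : ℂ} (hx : x ∈ Sspace) (hre : w.re = x.re) (h₀ : 0 ≤ w.im)
    (h₁ : w.im ≤ x.im) : w ∈ Sspace := by
  rcases h₀.eq_or_lt with h | h
  · exact mem_Sspace_iff.2 (Or.inl h.symm)
  · obtain ⟨m, hm⟩ := exists_int_re hx (h.trans_le h₁)
    exact mem_Sspace_iff.2 (Or.inr ⟨⟨m, hre.trans hm⟩, h₀, h₁.trans (im_le_one hx)⟩)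

end Sspace

lemma DegMap.map_add_int {F : ℂ → ℂ} (hF : DegMap 1 F) {z : ℂ} (hz : z ∈ Sspace) (k : ℤ) :
    F (z + k) = F z + k := by
  induction k using Int.induction_on with
  | zero => simp
  | succ n ih =>
    have := hF.2.2 _ (Sspace.add_int_mem hz n)
    push_cast at ih this ⊢
    rw [← add_assoc, this, ih, add_assoc]
  | pred n ih =>
    have := hF.2.2 _ (Sspace.add_int_mem hz (-n - 1))
    push_cast at ih this ⊢
    rw [show z + (-n - 1) + 1 = z + -n by ring, ih] at this
    linear_combination -this

lemma add_int_mem_trZ_iff {A : Set ℂ} {z : ℂ} {k : ℤ} : z + k ∈ trZ A ↔ z ∈ trZ A := by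
  constructor
  · rintro ⟨w, hw, j, hj⟩
    exact ⟨w, hw, j - k, by push_cast; linear_combination hj⟩
  · rintro ⟨w, hw, j, rfl⟩
    exact ⟨w, hw, j + k, by push_cast; ring⟩

lemma mem_trZ_of_mem {A : Set ℂ} {z : ℂ} (hz : z ∈ A) (k : ℤ) : z + k ∈ trZ A :=
  ⟨z, hz, k, rfl⟩

lemma exists_eq_add_of_mem_trZ_singleton {e z : ℂ} (hz : z ∈ trZ {e}) :
    ∃ k : ℤ, z = e + k := by
  obtain ⟨w, rfl, k, rfl⟩ := hz
  exact ⟨k, rfl⟩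

/-! ### Arcs of `S` -/

lemma sHull_subset {A D : Set ℂ} (hAD : A ⊆ D) (hDS : D ⊆ Sspace) (hD : IsClosed D)
    (hD' : IsConnected D) : sHull A ⊆ D :=
  sInter_subset_of_mem ⟨hAD, hDS, hD, hD'⟩

lemma sHull_eq_of_forall_subset {A D : Set ℂ} (hAD : A ⊆ D) (hDS : D ⊆ Sspace)
    (hD : IsClosed D) (hD' : IsConnected D)
    (hmin : ∀ C ⊆ Sspace, A ⊆ C → IsPreconnected C → D ⊆ C) : sHull A = D :=
  (sHull_subset hAD hDS hD hD').antisymm fun _ hz _ ⟨hAC, hCS, _, hC⟩ =>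
    hmin _ hCS hAC hC.isPreconnected hz

lemma sHull_pair_eq_image {p q : ℂ} {γ : ℝ → ℂ} {L : ℝ} (hL : 0 ≤ L) (hγ : Continuous γ)
    (hγ₀ : γ 0 = p) (hγL : γ L = q) (hS : γ '' Icc 0 L ⊆ Sspace)
    (hmin : ∀ C ⊆ Sspace, IsPreconnected C → p ∈ C → q ∈ C → γ '' Icc 0 L ⊆ C) :
    sHull {p, q} = γ '' Icc 0 L := by
  refine sHull_eq_of_forall_subset ?_ hS (isCompact_Icc.image hγ).isClosed
    ((isConnected_Icc hL).image _ hγ.continuousOn) fun C hCS hpq hC =>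
      hmin C hCS hC (hpq (mem_insert _ _)) (hpq (mem_insert_of_mem _ rfl))
  rintro _ (rfl | rfl)
  exacts [⟨0, left_mem_Icc.2 hL, hγ₀⟩, ⟨L, right_mem_Icc.2 hL, hγL⟩]

/-- `hcut` says that `O ∩ S` is closed, hence clopen, in `S \ {z}`: the point `z` cuts `S`. -/
lemma mem_of_isPreconnected_of_cut {C O : Set ℂ} {p q z : ℂ} (hCS : C ⊆ Sspace)
    (hC : IsPreconnected C) (hO : IsOpen O) (hcut : closure (O ∩ Sspace) ∩ Sspace ⊆ insert z O)
    (hp : p ∈ C) (hpO : p ∈ O) (hq : q ∈ C) (hqO : q ∉ O) (hqz : q ≠ z) : z ∈ C := by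
  by_contra hz
  have hcover : C ⊆ O ∪ (closure (O ∩ Sspace))ᶜ := by
    intro w hw
    by_cases hwO : w ∈ O
    · exact Or.inl hwO
    · refine Or.inr fun hcl => ?_
      rcases hcut ⟨hcl, hCS hw⟩ with rfl | h
      · exact hz hw
      · exact hwO h
  have hqcl : q ∈ (closure (O ∩ Sspace))ᶜ := fun h =>
    (hcut ⟨h, hCS hq⟩).elim hqz hqO
  obtain ⟨w, hwC, hwO, hw⟩ :=
    hC O _ hO isClosed_closure.isOpen_compl hcover ⟨p, hp, hpO⟩ ⟨q, hq, hqcl⟩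
  exact hw (subset_closure ⟨hwO, hCS hwC⟩)

lemma mem_of_isPreconnected_of_branch_cut {C : Set ℂ} {p q z : ℂ} (hCS : C ⊆ Sspace)
    (hC : IsPreconnected C) {m : ℤ} (hzre : z.re = m) (hzim : 0 ≤ z.im)
    (hp : p ∈ C) (hpre : p.re = z.re) (hpim : z.im < p.im)
    (hq : q ∈ C) (hqO : q.im ≤ z.im ∨ q.re ≠ z.re) (hqz : q ≠ z) : z ∈ C := by
  set O : Set ℂ := {w | z.im < w.im ∧ |w.re - z.re| < 1}
  have hOS : O ∩ Sspace ⊆ {w | w.re = z.re ∧ z.im ≤ w.im} := by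
    rintro w ⟨⟨hw1, hw2⟩, hwS⟩
    rw [hzre] at hw2 ⊢
    exact ⟨Sspace.re_eq_of_abs_sub_lt_one hwS (hzim.trans_lt hw1) hw2, hw1.le⟩
  have hclosed : IsClosed {w : ℂ | w.re = z.re ∧ z.im ≤ w.im} :=
    (isClosed_eq Complex.continuous_re continuous_const).inter
      (isClosed_le continuous_const Complex.continuous_im)
  refine mem_of_isPreconnected_of_cut hCS hC (O := O) ?_ ?_ hp ⟨hpim, by simp [hpre]⟩ hq ?_ hqz
  · exact (isOpen_lt continuous_const Complex.continuous_im).inter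
      (isOpen_lt (Complex.continuous_re.sub continuous_const).abs continuous_const)
  · rintro w ⟨hw, -⟩
    obtain ⟨hre, him⟩ := closure_minimal hOS hclosed hw
    rcases him.eq_or_lt with h | h
    · exact Or.inl (Complex.ext hre h.symm)
    · exact Or.inr ⟨h, by simp [hre]⟩
  · rintro ⟨h1, h2⟩
    rcases hqO with h | h
    · exact h.not_gt h1
    · rw [hzre] at h2 h
      exact h (Sspace.re_eq_of_abs_sub_lt_one (hCS hq) (hzim.trans_lt h1) h2)

lemma mem_of_isPreconnected_of_real_cut {C : Set ℂ} {p q z : ℂ} (hCS : C ⊆ Sspace)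
    (hC : IsPreconnected C) (hzim : z.im = 0) (hp : p ∈ C) (hpre : z.re < p.re)
    (hq : q ∈ C) (hqre : q.re < z.re) : z ∈ C := by
  -- `δ` is the gap between `z` and the first branch to its right.
  set δ := ⌊z.re⌋ + 1 - z.re
  have hδ : 0 < δ := by simp only [δ, sub_pos, Int.lt_floor_add_one]
  have hOS : {w | z.re < w.re} ∩ Sspace ⊆ {w | z.re ≤ w.re ∧ δ * w.im ≤ w.re - z.re} := by
    rintro w ⟨hw, hwS⟩
    refine ⟨hw.le, ?_⟩
    rcases (Sspace.im_nonneg hwS).eq_or_lt with h | h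
    · rw [← h, mul_zero, sub_nonneg]
      exact hw.le
    · obtain ⟨n, hn⟩ := Sspace.exists_int_re hwS h
      have : (⌊z.re⌋ : ℝ) + 1 ≤ n := by
        exact_mod_cast Int.floor_lt.2 (hn ▸ hw : z.re < n)
      nlinarith [Sspace.im_le_one hwS]
  have hclosed : IsClosed {w : ℂ | z.re ≤ w.re ∧ δ * w.im ≤ w.re - z.re} :=
    (isClosed_le continuous_const Complex.continuous_re).inter
      (isClosed_le (continuous_const.mul Complex.continuous_im)
        (Complex.continuous_re.sub continuous_const))
  refine mem_of_isPreconnected_of_cut hCS hC (isOpen_lt continuous_const Complex.continuous_re)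
    ?_ hp hpre hq hqre.not_gt (fun h => hqre.ne (h ▸ rfl))
  rintro w ⟨hw, hwS⟩
  obtain ⟨hre, him⟩ := closure_minimal hOS hclosed hw
  rcases hre.eq_or_lt with h | h
  · refine Or.inl (Complex.ext h.symm ?_)
    rw [← h, sub_self] at him
    linarith [Sspace.im_nonneg hwS, nonpos_of_mul_nonpos_right him hδ]
  · exact Or.inr h

lemma mem_of_isPreconnected_of_re_eq_of_im_le {C : Set ℂ} (hCS : C ⊆ Sspace)
    (hC : IsPreconnected C) {x y z : ℂ} (hxC : x ∈ C) (hyC : y ∈ C) (hyx : y.re ≠ x.re)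
    (hzre : z.re = x.re) (hz₀ : 0 ≤ z.im) (hz₁ : z.im ≤ x.im) : z ∈ C := by
  rcases hz₁.eq_or_lt with h | h
  · exact (Complex.ext hzre h : z = x) ▸ hxC
  obtain ⟨m, hm⟩ := Sspace.exists_int_re (hCS hxC) (hz₀.trans_lt h)
  exact mem_of_isPreconnected_of_branch_cut hCS hC (hzre.trans hm) hz₀ hxC hzre.symm h hyC
    (Or.inr (hzre ▸ hyx)) fun hyz => hyx (hyz ▸ hzre)

/-! ### Charts of arcs -/

/-- A chart of the arc `⟨{p, q}⟩`: a parametrization `γ` from `p` to `q` and a coordinate `ξ`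
on `S` inverting `γ` on the arc and locally constant off it, i.e. the coordinate of the
retraction of `S` onto the arc. -/
structure ArcChart (p q : ℂ) where
  len : ℝ
  γ : ℝ → ℂ
  ξ : ℂ → ℝ
  len_pos : 0 < len
  continuous_γ : Continuous γ
  continuous_ξ : Continuous ξ
  γ_zero : γ 0 = p
  γ_len : γ len = q
  γ_mem : ∀ t ∈ Icc 0 len, γ t ∈ Sspace
  ξ_γ : ∀ t ∈ Icc 0 len, ξ (γ t) = t
  ξ_mem : ∀ w ∈ Sspace, ξ w ∈ Icc 0 len
  sHull_eq : sHull {p, q} = γ '' Icc 0 len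
  eventually_ξ_eq : ∀ w ∈ Sspace, w ∉ sHull {p, q} → ∀ᶠ w' in 𝓝[Sspace] w, ξ w' = ξ w

namespace ArcChart

variable {p q : ℂ} (P : ArcChart p q)

lemma γ_mem_sHull {t : ℝ} (ht : t ∈ Icc 0 P.len) : P.γ t ∈ sHull {p, q} :=
  P.sHull_eq ▸ mem_image_of_mem _ ht

lemma γ_ξ {w : ℂ} (hw : w ∈ sHull {p, q}) : P.γ (P.ξ w) = w := by
  rw [P.sHull_eq] at hw
  obtain ⟨t, ht, rfl⟩ := hw
  rw [P.ξ_γ t ht]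

lemma ξ_left : P.ξ p = 0 := by
  simpa [P.γ_zero] using P.ξ_γ 0 (left_mem_Icc.2 P.len_pos.le)

lemma ξ_right : P.ξ q = P.len := by
  simpa [P.γ_len] using P.ξ_γ P.len (right_mem_Icc.2 P.len_pos.le)

lemma ξ_le_of_mem_sHull {x y : ℂ} (hy : y ∈ sHull {p, q}) (hx : x ∈ sHull {p, y}) :
    x ∈ sHull {p, q} ∧ P.ξ x ≤ P.ξ y := by
  rw [P.sHull_eq] at hy ⊢
  obtain ⟨v, hv, rfl⟩ := hy
  have hsub : sHull {p, P.γ v} ⊆ P.γ '' Icc 0 v := by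
    refine sHull_subset ?_ ?_ (isCompact_Icc.image P.continuous_γ).isClosed
      ((isConnected_Icc hv.1).image _ P.continuous_γ.continuousOn)
    · rintro _ (rfl | rfl)
      exacts [⟨0, left_mem_Icc.2 hv.1, P.γ_zero⟩, ⟨v, right_mem_Icc.2 hv.1, rfl⟩]
    · rintro _ ⟨t, ht, rfl⟩
      exact P.γ_mem t ⟨ht.1, ht.2.trans hv.2⟩
  obtain ⟨s, hs, rfl⟩ := hsub hx
  have hs' : s ∈ Icc 0 P.len := ⟨hs.1, hs.2.trans hv.2⟩
  exact ⟨⟨s, hs', rfl⟩, by rw [P.ξ_γ s hs', P.ξ_γ v hv]; exact hs.2⟩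

def reverse : ArcChart q p where
  len := P.len
  γ t := P.γ (P.len - t)
  ξ w := P.len - P.ξ w
  len_pos := P.len_pos
  continuous_γ := P.continuous_γ.comp (continuous_const.sub continuous_id)
  continuous_ξ := continuous_const.sub P.continuous_ξ
  γ_zero := by simpa using P.γ_len
  γ_len := by simpa using P.γ_zero
  γ_mem t ht := P.γ_mem _ ⟨sub_nonneg.2 ht.2, sub_le_self _ ht.1⟩
  ξ_γ t ht := by simp [P.ξ_γ _ ⟨sub_nonneg.2 ht.2, sub_le_self _ ht.1⟩]
  ξ_mem w hw := ⟨sub_nonneg.2 (P.ξ_mem w hw).2, sub_le_self _ (P.ξ_mem w hw).1⟩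
  sHull_eq := by
    rw [pair_comm, P.sHull_eq, ← image_image P.γ (P.len - ·), image_const_sub_Icc, sub_self,
      sub_zero]
  eventually_ξ_eq w hw hw' :=
    (P.eventually_ξ_eq w hw (pair_comm q p ▸ hw')).mono fun w' h => by rw [h]

end ArcChart

section VerticalChart

variable {p q : ℂ}

def verticalArc (p q : ℂ) : Set ℂ := {w | w.re = p.re ∧ p.im ≤ w.im ∧ w.im ≤ q.im}

def verticalγ (p : ℂ) (t : ℝ) : ℂ := p + t * Complex.I

/-- The coordinate of the retraction of `S` onto the vertical segment from `p` up to `q`. -/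
def verticalξ (p q : ℂ) (w : ℂ) : ℝ := max 0 (min (max w.im p.im) q.im - p.im - |w.re - p.re|)

lemma continuous_verticalγ : Continuous (verticalγ p) := by
  unfold verticalγ
  fun_prop

lemma image_verticalγ : verticalγ p '' Icc 0 (q.im - p.im) = verticalArc p q := by
  ext w
  constructor
  · rintro ⟨t, ht, rfl⟩
    exact ⟨by simp [verticalγ], by simpa [verticalγ] using ht.1,
      by simp [verticalγ]; linarith [ht.2]⟩
  · rintro ⟨hwre, hw₀, hw₁⟩
    refine ⟨w.im - p.im, ⟨by linarith, by linarith⟩, Complex.ext ?_ ?_⟩ <;> simp [verticalγ, hwre]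

lemma verticalξ_eq_zero_of_im_le {w : ℂ} (h : w.im ≤ p.im) : verticalξ p q w = 0 := by
  simp [verticalξ, h]

lemma verticalξ_of_im_ge (him : p.im < q.im) {w : ℂ} (hwre : w.re = p.re) (hw : q.im ≤ w.im) :
    verticalξ p q w = q.im - p.im := by
  simp [verticalξ, hwre, min_eq_right (le_max_of_le_left hw), him.le]

variable (hp : p ∈ Sspace) (hq : q ∈ Sspace) (hre : p.re = q.re) (him : p.im < q.im)
include hp hq hre him

lemma verticalξ_eq_zero_of_re_ne {w : ℂ} (hw : w ∈ Sspace) (hne : w.re ≠ p.re) :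
    verticalξ p q w = 0 := by
  rcases le_or_gt w.im p.im with h | h
  · exact verticalξ_eq_zero_of_im_le h
  obtain ⟨m, hm⟩ := hre ▸ Sspace.exists_int_re hq ((Sspace.im_nonneg hp).trans_lt him)
  have h₁ : 1 ≤ |w.re - p.re| := not_lt.1 fun h' =>
    hne (hm ▸ Sspace.re_eq_of_abs_sub_lt_one hw ((Sspace.im_nonneg hp).trans_lt h) (hm ▸ h'))
  have := Sspace.im_le_one hq
  have := Sspace.im_nonneg hp
  simp only [verticalξ, max_eq_left_iff]
  linarith [min_le_right (max w.im p.im) q.im]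

omit him in
lemma verticalArc_subset_Sspace : verticalArc p q ⊆ Sspace := fun _ ⟨hwre, hw₀, hw₁⟩ =>
  Sspace.mem_of_re_eq_of_im_le hq (hwre.trans hre) ((Sspace.im_nonneg hp).trans hw₀) hw₁

lemma verticalArc_subset_of_isPreconnected {C : Set ℂ} (hCS : C ⊆ Sspace)
    (hC : IsPreconnected C) (hpC : p ∈ C) (hqC : q ∈ C) : verticalArc p q ⊆ C := by
  rintro z ⟨hzre, hz₀, hz₁⟩
  rcases hz₀.eq_or_lt with h | h
  · exact (Complex.ext hzre h.symm : z = p) ▸ hpC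
  rcases hz₁.eq_or_lt with h' | h'
  · exact (Complex.ext (hzre.trans hre) h' : z = q) ▸ hqC
  obtain ⟨m, hm⟩ := Sspace.exists_int_re hq ((Sspace.im_nonneg hp).trans_lt him)
  exact mem_of_isPreconnected_of_branch_cut hCS hC (hzre.trans (hre.trans hm))
    ((Sspace.im_nonneg hp).trans hz₀) hqC (hre ▸ hzre.symm) h' hpC (Or.inl hz₀)
    fun hpz => h.ne (hpz ▸ rfl)

lemma sHull_vertical : sHull {p, q} = verticalArc p q :=
  (sHull_pair_eq_image (sub_nonneg.2 him.le) continuous_verticalγ (by simp [verticalγ])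
    (Complex.ext (by simp [verticalγ, hre]) (by simp [verticalγ]))
    (image_verticalγ ▸ verticalArc_subset_Sspace hp hq hre)
    fun _ hCS hC hpC hqC => image_verticalγ ▸
      verticalArc_subset_of_isPreconnected hp hq hre him hCS hC hpC hqC).trans image_verticalγ

lemma eventually_verticalξ_eq {w : ℂ} (hw : w ∈ Sspace) (hw' : w ∉ verticalArc p q) :
    ∀ᶠ w' in 𝓝[Sspace] w, verticalξ p q w' = verticalξ p q w := by
  have him' := Complex.continuous_im.continuousWithinAt (s := Sspace) (x := w)
  by_cases hwre : w.re = p.re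
  · rcases lt_or_ge w.im p.im with hlow | hhigh
    · filter_upwards [him'.eventually_lt_const hlow] with w' hw'
      rw [verticalξ_eq_zero_of_im_le hw'.le, verticalξ_eq_zero_of_im_le hlow.le]
    · have hup : q.im < w.im := lt_of_not_ge fun h => hw' ⟨hwre, hhigh, h⟩
      filter_upwards [him'.eventually_const_lt hup, Sspace.eventually_re_eq hw
        ((Sspace.im_nonneg hq).trans_lt hup)] with w' h₁ h₂
      rw [verticalξ_of_im_ge him (h₂.trans hwre) h₁.le, verticalξ_of_im_ge him hwre hup.le]
  · filter_upwards [Complex.continuous_re.continuousWithinAt.eventually_ne hwre,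
      self_mem_nhdsWithin] with w' h₁ h₂
    rw [verticalξ_eq_zero_of_re_ne hp hq hre him h₂ h₁,
      verticalξ_eq_zero_of_re_ne hp hq hre him hw hwre]

def verticalChart : ArcChart p q where
  len := q.im - p.im
  γ := verticalγ p
  ξ := verticalξ p q
  len_pos := sub_pos.2 him
  continuous_γ := continuous_verticalγ
  continuous_ξ := by unfold verticalξ; fun_prop
  γ_zero := by simp [verticalγ]
  γ_len := Complex.ext (by simp [verticalγ, hre]) (by simp [verticalγ])
  γ_mem t ht := verticalArc_subset_Sspace hp hq hre (image_verticalγ ▸ mem_image_of_mem _ ht)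
  ξ_γ t ht := by
    simp [verticalξ, verticalγ, min_eq_left (by linarith [ht.2] : p.im + t ≤ q.im), ht.1]
  ξ_mem w _ := by
    refine ⟨le_max_left _ _, max_le (by linarith) ?_⟩
    linarith [min_le_right (max w.im p.im) q.im, abs_nonneg (w.re - p.re)]
  sHull_eq := by rw [sHull_vertical hp hq hre him, image_verticalγ]
  eventually_ξ_eq w hw hw' :=
    eventually_verticalξ_eq hp hq hre him hw (sHull_vertical hp hq hre him ▸ hw')

end VerticalChart

section HorizontalChart

/-- How high `w` lies on the branch segment below `x`; zero off that branch. -/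
def branchHeight (x w : ℂ) : ℝ := max 0 (min w.im x.im - |w.re - x.re|)

lemma branchHeight_of_re_eq {x w : ℂ} (hre : w.re = x.re) (hw : 0 ≤ w.im) (hx : 0 ≤ x.im) :
    branchHeight x w = min w.im x.im := by
  simp [branchHeight, hre, le_min hw hx]

lemma branchHeight_nonneg (x w : ℂ) : 0 ≤ branchHeight x w := le_max_left _ _

lemma branchHeight_le {x : ℂ} (hx : 0 ≤ x.im) (w : ℂ) : branchHeight x w ≤ x.im :=
  max_le hx (by linarith [min_le_right w.im x.im, abs_nonneg (w.re - x.re)])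

lemma branchHeight_of_im_eq_zero {x w : ℂ} (hx : 0 ≤ x.im) (hw : w.im = 0) :
    branchHeight x w = 0 := by
  simp [branchHeight, hw, hx]

lemma branchHeight_eq_zero {x w : ℂ} (hx : x ∈ Sspace) (hw : w ∈ Sspace) (hne : w.re ≠ x.re) :
    branchHeight x w = 0 := by
  rcases (Sspace.im_nonneg hw).eq_or_lt with h | h
  · exact branchHeight_of_im_eq_zero (Sspace.im_nonneg hx) h.symm
  refine max_eq_left ?_
  rcases (Sspace.im_nonneg hx).eq_or_lt with h' | h'
  · simp [← h', min_eq_right h.le]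
  obtain ⟨m, hm⟩ := Sspace.exists_int_re hx h'
  have : 1 ≤ |w.re - x.re| := not_lt.1 fun h'' =>
    hne (hm ▸ Sspace.re_eq_of_abs_sub_lt_one hw h (hm ▸ h''))
  linarith [min_le_right w.im x.im, Sspace.im_le_one hx]

variable {p q : ℂ}

/-- The coordinate of the retraction of `S` onto the arc that runs down the branch of `p`,
along the real axis and up the branch of `q`. -/
def horizontalξ (p q : ℂ) (w : ℂ) : ℝ :=
  p.im - branchHeight p w + (min (max w.re p.re) q.re - p.re) + branchHeight q w

def horizontalγ (p q : ℂ) (t : ℝ) : ℂ :=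
  ⟨max p.re (min q.re (p.re + (t - p.im))),
    max 0 (p.im - t) + max 0 (t - (p.im + (q.re - p.re)))⟩

lemma continuous_horizontalγ : Continuous (horizontalγ p q) := by
  have : horizontalγ p q = fun t => ((max p.re (min q.re (p.re + (t - p.im))) : ℝ) : ℂ) +
      ((max 0 (p.im - t) + max 0 (t - (p.im + (q.re - p.re))) : ℝ) : ℂ) * Complex.I :=
    funext fun _ => Complex.mk_eq_add_mul_I _ _
  rw [this]
  fun_prop

def horizontalArc (p q : ℂ) : Set ℂ :=
  {w | w.re = p.re ∧ 0 ≤ w.im ∧ w.im ≤ p.im} ∪ {w | w.im = 0 ∧ p.re ≤ w.re ∧ w.re ≤ q.re} ∪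
    {w | w.re = q.re ∧ 0 ≤ w.im ∧ w.im ≤ q.im}

lemma horizontalγ_of_le_left (hlt : p.re < q.re) {t : ℝ} (h : t ≤ p.im) :
    horizontalγ p q t = ⟨p.re, p.im - t⟩ :=
  Complex.ext (by simp [horizontalγ, min_eq_right (by linarith : p.re + (t - p.im) ≤ q.re), h])
    (by simp [horizontalγ, h]; linarith)

lemma horizontalγ_of_mem {t : ℝ} (h₁ : p.im ≤ t) (h₂ : t ≤ p.im + (q.re - p.re)) :
    horizontalγ p q t = ⟨p.re + (t - p.im), 0⟩ :=
  have h₂' : p.re + (t - p.im) ≤ q.re := by linarith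
  Complex.ext (by simp [horizontalγ, min_eq_right h₂', h₁])
    (by simp [horizontalγ, h₁]; linarith)

lemma horizontalγ_of_ge_right (hlt : p.re < q.re) {t : ℝ} (h : p.im + (q.re - p.re) ≤ t) :
    horizontalγ p q t = ⟨q.re, t - (p.im + (q.re - p.re))⟩ :=
  Complex.ext (by simp [horizontalγ, min_eq_left (by linarith : q.re ≤ p.re + (t - p.im)), hlt.le])
    (by simp [horizontalγ, h]; linarith)

variable (hp : p ∈ Sspace) (hq : q ∈ Sspace) (hlt : p.re < q.re)
include hp hq hlt

lemma horizontalξ_of_re_lt {w : ℂ} (hw : w ∈ Sspace) (h : w.re < p.re) :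
    horizontalξ p q w = p.im := by
  simp [horizontalξ, branchHeight_eq_zero hp hw h.ne, branchHeight_eq_zero hq hw (h.trans hlt).ne,
    max_eq_right h.le, hlt.le]

lemma horizontalξ_of_re_eq_left {w : ℂ} (hw : w ∈ Sspace) (h : w.re = p.re) :
    horizontalξ p q w = p.im - min w.im p.im := by
  simp [horizontalξ, branchHeight_of_re_eq h (Sspace.im_nonneg hw) (Sspace.im_nonneg hp),
    branchHeight_eq_zero hq hw (h ▸ hlt.ne), h, hlt.le]

omit hlt in
lemma horizontalξ_of_im_eq_zero {w : ℂ} (hw : w.im = 0) (h₁ : p.re ≤ w.re) (h₂ : w.re ≤ q.re) :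
    horizontalξ p q w = p.im + (w.re - p.re) := by
  simp [horizontalξ, branchHeight_of_im_eq_zero (Sspace.im_nonneg hp) hw,
    branchHeight_of_im_eq_zero (Sspace.im_nonneg hq) hw, max_eq_left h₁, min_eq_left h₂]

omit hlt in
lemma horizontalξ_of_mem_Ioo {w : ℂ} (hw : w ∈ Sspace) (h₁ : p.re < w.re) (h₂ : w.re < q.re) :
    horizontalξ p q w = p.im + (w.re - p.re) := by
  simp [horizontalξ, branchHeight_eq_zero hp hw h₁.ne', branchHeight_eq_zero hq hw h₂.ne,
    max_eq_left h₁.le, min_eq_left h₂.le]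

lemma horizontalξ_of_re_eq_right {w : ℂ} (hw : w ∈ Sspace) (h : w.re = q.re) :
    horizontalξ p q w = p.im + (q.re - p.re) + min w.im q.im := by
  simp [horizontalξ, branchHeight_of_re_eq h (Sspace.im_nonneg hw) (Sspace.im_nonneg hq),
    branchHeight_eq_zero hp hw (h ▸ hlt.ne'), h, hlt.le]

lemma horizontalξ_of_re_gt {w : ℂ} (hw : w ∈ Sspace) (h : q.re < w.re) :
    horizontalξ p q w = p.im + (q.re - p.re) := by
  simp [horizontalξ, branchHeight_eq_zero hp hw (hlt.trans h).ne', branchHeight_eq_zero hq hw h.ne',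
    max_eq_left (hlt.trans h).le, min_eq_right h.le]

lemma image_horizontalγ :
    horizontalγ p q '' Icc 0 (p.im + (q.re - p.re) + q.im) = horizontalArc p q := by
  ext w
  constructor
  · rintro ⟨t, ⟨ht₀, ht⟩, rfl⟩
    rcases le_total t p.im with h₁ | h₁
    · rw [horizontalγ_of_le_left hlt h₁]
      exact Or.inl (Or.inl ⟨rfl, by simpa using h₁, by simpa using ht₀⟩)
    rcases le_total t (p.im + (q.re - p.re)) with h₂ | h₂
    · rw [horizontalγ_of_mem h₁ h₂]
      exact Or.inl (Or.inr ⟨rfl, by simpa using h₁, by simp; linarith⟩)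
    · rw [horizontalγ_of_ge_right hlt h₂]
      exact Or.inr ⟨rfl, by simpa using h₂, by simp; linarith⟩
  · rintro ((⟨h₁, h₂, h₃⟩ | ⟨h₁, h₂, h₃⟩) | ⟨h₁, h₂, h₃⟩)
    · refine ⟨p.im - w.im, ⟨by linarith, by linarith [Sspace.im_nonneg hq]⟩, ?_⟩
      rw [horizontalγ_of_le_left hlt (by linarith)]
      exact Complex.ext h₁.symm (by simp)
    · refine ⟨p.im + (w.re - p.re), ⟨by linarith [Sspace.im_nonneg hp],
        by linarith [Sspace.im_nonneg hq]⟩, ?_⟩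
      rw [horizontalγ_of_mem (by linarith) (by linarith)]
      exact Complex.ext (by simp) (by simp [h₁])
    · refine ⟨p.im + (q.re - p.re) + w.im, ⟨by linarith [Sspace.im_nonneg hp], by linarith⟩, ?_⟩
      rw [horizontalγ_of_ge_right hlt (by linarith)]
      exact Complex.ext h₁.symm (by simp)

omit hlt in
lemma horizontalArc_subset_Sspace : horizontalArc p q ⊆ Sspace := by
  rintro w ((⟨h₁, h₂, h₃⟩ | ⟨h₁, -, -⟩) | ⟨h₁, h₂, h₃⟩)
  · exact Sspace.mem_of_re_eq_of_im_le hp h₁ h₂ h₃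
  · exact mem_Sspace_iff.2 (Or.inl h₁)
  · exact Sspace.mem_of_re_eq_of_im_le hq h₁ h₂ h₃

lemma horizontalArc_subset_of_isPreconnected {C : Set ℂ} (hCS : C ⊆ Sspace)
    (hC : IsPreconnected C) (hpC : p ∈ C) (hqC : q ∈ C) : horizontalArc p q ⊆ C := by
  rintro z ((⟨h₁, h₂, h₃⟩ | ⟨h₁, h₂, h₃⟩) | ⟨h₁, h₂, h₃⟩)
  · exact mem_of_isPreconnected_of_re_eq_of_im_le hCS hC hpC hqC hlt.ne' h₁ h₂ h₃
  · rcases h₂.eq_or_lt with h | h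
    · exact mem_of_isPreconnected_of_re_eq_of_im_le hCS hC hpC hqC hlt.ne' h.symm h₁.ge
        (h₁ ▸ Sspace.im_nonneg hp)
    rcases h₃.eq_or_lt with h' | h'
    · exact mem_of_isPreconnected_of_re_eq_of_im_le hCS hC hqC hpC hlt.ne h' h₁.ge
        (h₁ ▸ Sspace.im_nonneg hq)
    · exact mem_of_isPreconnected_of_real_cut hCS hC h₁ hqC h' hpC h
  · exact mem_of_isPreconnected_of_re_eq_of_im_le hCS hC hqC hpC hlt.ne h₁ h₂ h₃

lemma eventually_horizontalξ_eq {w : ℂ} (hw : w ∈ Sspace) (hw' : w ∉ horizontalArc p q) :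
    ∀ᶠ w' in 𝓝[Sspace] w, horizontalξ p q w' = horizontalξ p q w := by
  have hw₀ := Sspace.im_nonneg hw
  have hre := Complex.continuous_re.continuousWithinAt (s := Sspace) (x := w)
  have him := Complex.continuous_im.continuousWithinAt (s := Sspace) (x := w)
  rcases lt_trichotomy w.re p.re with h | h | h
  · filter_upwards [hre.eventually_lt_const h, self_mem_nhdsWithin] with w' h₁ h₂
    rw [horizontalξ_of_re_lt hp hq hlt h₂ h₁, horizontalξ_of_re_lt hp hq hlt hw h]
  · have hup : p.im < w.im := lt_of_not_ge fun h' => hw' (Or.inl (Or.inl ⟨h, hw₀, h'⟩))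
    filter_upwards [him.eventually_const_lt hup, Sspace.eventually_re_eq hw
      ((Sspace.im_nonneg hp).trans_lt hup), self_mem_nhdsWithin] with w' h₁ h₂ h₃
    rw [horizontalξ_of_re_eq_left hp hq hlt h₃ (h₂.trans h),
      horizontalξ_of_re_eq_left hp hq hlt hw h,
      min_eq_right h₁.le, min_eq_right hup.le]
  rcases lt_trichotomy w.re q.re with h' | h' | h'
  · have hup : 0 < w.im := hw₀.lt_of_ne fun h'' => hw' (Or.inl (Or.inr ⟨h''.symm, h.le, h'.le⟩))
    filter_upwards [Sspace.eventually_re_eq hw hup, self_mem_nhdsWithin] with w' h₁ h₂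
    rw [horizontalξ_of_mem_Ioo hp hq h₂ (h₁ ▸ h) (h₁ ▸ h'),
      horizontalξ_of_mem_Ioo hp hq hw h h', h₁]
  · have hup : q.im < w.im := lt_of_not_ge fun h'' => hw' (Or.inr ⟨h', hw₀, h''⟩)
    filter_upwards [him.eventually_const_lt hup, Sspace.eventually_re_eq hw
      ((Sspace.im_nonneg hq).trans_lt hup), self_mem_nhdsWithin] with w' h₁ h₂ h₃
    rw [horizontalξ_of_re_eq_right hp hq hlt h₃ (h₂.trans h'),
      horizontalξ_of_re_eq_right hp hq hlt hw h',
      min_eq_right h₁.le, min_eq_right hup.le]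
  · filter_upwards [hre.eventually_const_lt h', self_mem_nhdsWithin] with w' h₁ h₂
    rw [horizontalξ_of_re_gt hp hq hlt h₂ h₁, horizontalξ_of_re_gt hp hq hlt hw h']

omit hq in
lemma horizontalγ_left : horizontalγ p q 0 = p := by
  rw [horizontalγ_of_le_left hlt (Sspace.im_nonneg hp)]
  exact Complex.ext rfl (sub_zero _)

omit hp in
lemma horizontalγ_right : horizontalγ p q (p.im + (q.re - p.re) + q.im) = q := by
  rw [horizontalγ_of_ge_right hlt (by linarith [Sspace.im_nonneg hq])]
  exact Complex.ext rfl (add_sub_cancel_left _ _)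

lemma horizontalξ_horizontalγ {t : ℝ} (ht : t ∈ Icc 0 (p.im + (q.re - p.re) + q.im)) :
    horizontalξ p q (horizontalγ p q t) = t := by
  have hS := horizontalArc_subset_Sspace hp hq
    (image_horizontalγ hp hq hlt ▸ mem_image_of_mem _ ht)
  rcases le_total t p.im with h₁ | h₁
  · rw [horizontalγ_of_le_left hlt h₁] at hS ⊢
    rw [horizontalξ_of_re_eq_left hp hq hlt hS rfl, min_eq_left (by simp [ht.1])]
    ring
  rcases le_total t (p.im + (q.re - p.re)) with h₂ | h₂
  · rw [horizontalγ_of_mem h₁ h₂, horizontalξ_of_im_eq_zero hp hq rfl (by simpa using h₁)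
      (by simp; linarith)]
    ring
  · rw [horizontalγ_of_ge_right hlt h₂] at hS ⊢
    rw [horizontalξ_of_re_eq_right hp hq hlt hS rfl, min_eq_left (by simp; linarith [ht.2])]
    ring

lemma horizontalξ_mem_Icc (w : ℂ) :
    horizontalξ p q w ∈ Icc 0 (p.im + (q.re - p.re) + q.im) := by
  have := branchHeight_le (Sspace.im_nonneg hp) w
  have := branchHeight_le (Sspace.im_nonneg hq) w
  have := branchHeight_nonneg p w
  have := branchHeight_nonneg q w
  have : p.re ≤ min (max w.re p.re) q.re := le_min (le_max_right _ _) hlt.le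
  have := min_le_right (max w.re p.re) q.re
  constructor <;> simp only [horizontalξ] <;> linarith

lemma sHull_horizontal : sHull {p, q} = horizontalArc p q :=
  (sHull_pair_eq_image (by linarith [Sspace.im_nonneg hp, Sspace.im_nonneg hq])
    continuous_horizontalγ (horizontalγ_left hp hlt) (horizontalγ_right hq hlt)
    (image_horizontalγ hp hq hlt ▸ horizontalArc_subset_Sspace hp hq)
    fun _ hCS hC hpC hqC => image_horizontalγ hp hq hlt ▸
      horizontalArc_subset_of_isPreconnected hp hq hlt hCS hC hpC hqC).trans
    (image_horizontalγ hp hq hlt)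

def horizontalChart : ArcChart p q where
  len := p.im + (q.re - p.re) + q.im
  γ := horizontalγ p q
  ξ := horizontalξ p q
  len_pos := by linarith [Sspace.im_nonneg hp, Sspace.im_nonneg hq]
  continuous_γ := continuous_horizontalγ
  continuous_ξ := by unfold horizontalξ branchHeight; fun_prop
  γ_zero := horizontalγ_left hp hlt
  γ_len := horizontalγ_right hq hlt
  γ_mem t ht := horizontalArc_subset_Sspace hp hq
    (image_horizontalγ hp hq hlt ▸ mem_image_of_mem _ ht)
  ξ_γ _ := horizontalξ_horizontalγ hp hq hlt
  ξ_mem w _ := horizontalξ_mem_Icc hp hq hlt w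
  sHull_eq := by rw [sHull_horizontal hp hq hlt, image_horizontalγ hp hq hlt]
  eventually_ξ_eq w hw hw' :=
    eventually_horizontalξ_eq hp hq hlt hw (sHull_horizontal hp hq hlt ▸ hw')

end HorizontalChart

lemma exists_arcChart {p q : ℂ} (hp : p ∈ Sspace) (hq : q ∈ Sspace) (hpq : p ≠ q) :
    Nonempty (ArcChart p q) := by
  rcases lt_trichotomy p.re q.re with h | h | h
  · exact ⟨horizontalChart hp hq h⟩
  · rcases lt_trichotomy p.im q.im with h' | h' | h'
    · exact ⟨verticalChart hp hq h h'⟩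
    · exact absurd (Complex.ext h h') hpq
    · exact ⟨(verticalChart hq hp h.symm h').reverse⟩
  · exact ⟨(horizontalChart hq hp h).reverse⟩

/-! ### Coverings read in charts -/

/-- `[0, L]` covers `[0, L']` under `φ`, preserving the orientation if `pos` and reversing it
otherwise. -/
def IccCover (L L' : ℝ) (φ : ℝ → ℝ) (pos : Bool) : Prop :=
  ∃ u ∈ Icc 0 L, ∃ v ∈ Icc 0 L, u ≤ v ∧
    φ u = (if pos then 0 else L') ∧ φ v = (if pos then L' else 0)

lemma exists_le_le_eq_of_continuousOn {φ : ℝ → ℝ} {u v α β : ℝ} (hφ : ContinuousOn φ (Icc u v))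
    (huv : u ≤ v) (hβ : β ∈ uIcc (φ u) (φ v)) (hα : α ∈ uIcc (φ u) β) :
    ∃ x y, u ≤ x ∧ x ≤ y ∧ y ≤ v ∧ φ x = α ∧ φ y = β := by
  rw [← uIcc_of_le huv] at hφ
  obtain ⟨y, hy, rfl⟩ := intermediate_value_uIcc hφ hβ
  rw [uIcc_of_le huv] at hy
  obtain ⟨x, hx, rfl⟩ := intermediate_value_uIcc
    (hφ.mono (by rw [uIcc_of_le huv, uIcc_of_le hy.1]; exact Icc_subset_Icc_right hy.2)) hα
  rw [uIcc_of_le hy.1] at hx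
  exact ⟨x, y, hx.1, hx.2, hy.2, rfl, rfl⟩

lemma IccCover.comp {L L' L'' : ℝ} {φ φ' : ℝ → ℝ} {s s' : Bool}
    (hφ : ContinuousOn φ (Icc 0 L)) (h : IccCover L L' φ s) (h' : IccCover L' L'' φ' s') :
    IccCover L L'' (φ' ∘ φ) (s == s') := by
  obtain ⟨u, hu, v, hv, huv, hφu, hφv⟩ := h
  obtain ⟨u', hu', v', hv', huv', hφu', hφv'⟩ := h'
  -- `φ` meets `u'` before `v'` if it preserves the orientation, and after it otherwise.
  obtain ⟨x, y, hux, hxy, hyv, hx, hy⟩ := exists_le_le_eq_of_continuousOn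
    (hφ.mono (Icc_subset_Icc hu.1 hv.2)) huv (α := if s then u' else v')
    (β := if s then v' else u') (by cases s <;> simp_all [mem_uIcc])
    (by cases s <;> simp_all)
  refine ⟨x, ⟨hu.1.trans hux, hxy.trans (hyv.trans hv.2)⟩, y, ⟨hu.1.trans (hux.trans hxy),
    hyv.trans hv.2⟩, hxy, ?_, ?_⟩ <;> cases s <;> cases s' <;> simp_all

lemma PosCovers.exists_chart_coord {G : ℂ → ℂ} {p q p' q' c d : ℂ} (P : ArcChart p q)
    (P' : ArcChart p' q') (h : PosCovers G p q c d) :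
    ∃ u ∈ Icc 0 P.len, ∃ v ∈ Icc 0 P.len, u ≤ v ∧
      P'.ξ (G (P.γ u)) = P'.ξ c ∧ P'.ξ (G (P.γ v)) = P'.ξ d := by
  obtain ⟨x, y, -, hy, hxy, rfl, rfl⟩ := h
  obtain ⟨hx, hle⟩ := P.ξ_le_of_mem_sHull hy hxy
  refine ⟨P.ξ x, ?_, P.ξ y, ?_, hle, by rw [P.γ_ξ hx], by rw [P.γ_ξ hy]⟩ <;>
    rw [P.sHull_eq] at hx hy
  · obtain ⟨t, ht, rfl⟩ := hx; rwa [P.ξ_γ t ht]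
  · obtain ⟨t, ht, rfl⟩ := hy; rwa [P.ξ_γ t ht]

lemma PosCovers.iccCover {G : ℂ → ℂ} {p q p' q' : ℂ} (P : ArcChart p q) (P' : ArcChart p' q')
    (h : PosCovers G p q p' q') : IccCover P.len P'.len (fun t => P'.ξ (G (P.γ t))) true := by
  obtain ⟨u, hu, v, hv, huv, h₁, h₂⟩ := h.exists_chart_coord P P'
  exact ⟨u, hu, v, hv, huv, h₁.trans P'.ξ_left, h₂.trans P'.ξ_right⟩

lemma NegCovers.iccCover {G : ℂ → ℂ} {p q p' q' : ℂ} (P : ArcChart p q) (P' : ArcChart p' q')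
    (h : NegCovers G p q p' q') : IccCover P.len P'.len (fun t => P'.ξ (G (P.γ t))) false := by
  obtain ⟨u, hu, v, hv, huv, h₁, h₂⟩ := PosCovers.exists_chart_coord P P' h
  exact ⟨u, hu, v, hv, huv, h₁.trans P'.ξ_right, h₂.trans P'.ξ_left⟩

/-- `Φ` is `F^[n] - K` read in charts along the itinerary `I`, wherever the orbit really follows
`I`; where it has left `I`, only the retraction is recorded, which makes `Φ` locally constant. -/
structure CoordOrbit (F : ℂ → ℂ) {p₀ q₀ p q : ℂ} (P₀ : ArcChart p₀ q₀) (P : ArcChart p q)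
    (I : ℕ → Set ℂ) (n : ℕ) (K : ℤ) (Φ : ℝ → ℝ) : Prop where
  continuousOn : ContinuousOn Φ (Icc 0 P₀.len)
  mapsTo : MapsTo Φ (Icc 0 P₀.len) (Icc 0 P.len)
  eventually_eq_or_orbit : ∀ t ∈ Icc 0 P₀.len, (∀ᶠ s in 𝓝[Icc 0 P₀.len] t, Φ s = Φ t) ∨
    (F^[n] (P₀.γ t) = P.γ (Φ t) + K ∧ ∀ i < n, F^[i] (P₀.γ t) ∈ trZ (I i))

namespace CoordOrbit

variable {F : ℂ → ℂ} {p₀ q₀ p q : ℂ} {P₀ : ArcChart p₀ q₀} {P : ArcChart p q}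
  {I : ℕ → Set ℂ} {n : ℕ} {K : ℤ} {Φ : ℝ → ℝ}

lemma zero (F : ℂ → ℂ) (P₀ : ArcChart p₀ q₀) (I : ℕ → Set ℂ) : CoordOrbit F P₀ P₀ I 0 0 id :=
  ⟨continuousOn_id, fun _ ht => ht, fun _ _ => Or.inr ⟨by simp, fun _ hi => absurd hi (by omega)⟩⟩

lemma succ (hF : DegMap 1 F) (h : CoordOrbit F P₀ P I n K Φ) (hI : I n = sHull {p, q})
    {p' q' : ℂ} (P' : ArcChart p' q') (k : ℤ) :
    CoordOrbit F P₀ P' I (n + 1) (K + k) (fun t => P'.ξ (F (P.γ (Φ t)) - k)) := by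
  have hγS : ∀ t ∈ Icc 0 P₀.len, P.γ (Φ t) ∈ Sspace := fun t ht => P.γ_mem _ (h.mapsTo ht)
  have hS : ∀ t ∈ Icc 0 P₀.len, F (P.γ (Φ t)) - k ∈ Sspace :=
    fun t ht => Sspace.sub_int_mem (hF.1 (hγS t ht)) k
  have hcont : ContinuousOn (fun t => F (P.γ (Φ t)) - k) (Icc 0 P₀.len) :=
    (hF.2.1.comp (P.continuous_γ.comp_continuousOn h.continuousOn) hγS).sub continuousOn_const
  refine ⟨P'.continuous_ξ.comp_continuousOn hcont, fun t ht => P'.ξ_mem _ (hS t ht),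
    fun t ht => ?_⟩
  rcases h.eventually_eq_or_orbit t ht with hloc | ⟨horb, hitin⟩
  · exact Or.inl (hloc.mono fun s hs => by simp only [hs])
  by_cases hw : F (P.γ (Φ t)) - k ∈ sHull {p', q'}
  · refine Or.inr ⟨?_, fun i hi => ?_⟩
    · rw [iterate_succ_apply', horb, hF.map_add_int (hγS t ht), P'.γ_ξ hw]
      push_cast
      ring
    · rcases (Nat.lt_succ_iff_lt_or_eq.1 hi) with hi | rfl
      · exact hitin i hi
      · rw [horb, hI]
        exact mem_trZ_of_mem (P.γ_mem_sHull (h.mapsTo ht)) K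
  · exact Or.inl (((hcont t ht).tendsto_nhdsWithin hS).eventually
      (P'.eventually_ξ_eq _ (hS t ht) hw))

end CoordOrbit

/-- At a fixed point where `Φ` is locally constant, `Φ - id` passes from positive to negative.
Were all fixed points of this kind, `Φ ≤ id` would propagate from `u` to `v` (where `Φ u = 0`,
`Φ v = L`), making `v = L` such a fixed point, with `Φ > id` just to its left. -/
lemma exists_fixed_of_iccCover {L : ℝ} (hL : 0 < L) {Φ : ℝ → ℝ} {G : ℝ → Prop}
    (hΦ : ContinuousOn Φ (Icc 0 L)) (hcov : IccCover L L Φ true)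
    (hfix : ∀ t ∈ Icc 0 L, Φ t = t → (∀ᶠ s in 𝓝[Icc 0 L] t, Φ s = Φ t) ∨ G t) :
    ∃ t ∈ Icc 0 L, Φ t = t ∧ G t := by
  by_contra! hno
  have hloc : ∀ t ∈ Icc 0 L, Φ t = t → ∀ᶠ s in 𝓝[Icc 0 L] t, Φ s = t := fun t ht h =>
    ((hfix t ht h).resolve_right (hno t ht h)).mono fun s hs => hs.trans h
  obtain ⟨u, hu, v, hv, huv, hΦu, hΦv⟩ := hcov
  simp only [if_true] at hΦu hΦv
  have hle : Icc u v ⊆ {t | Φ t ≤ t} := by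
    refine IsClosed.Icc_subset_of_forall_mem_nhdsWithin ?_ (by simp [hΦu, hu.1]) ?_
    · rw [inter_comm]
      exact isClosed_Icc.isClosed_le (hΦ.mono (Icc_subset_Icc hu.1 hv.2)) continuousOn_id
    rintro x ⟨hx, hxu, hxv⟩
    have hnhds : 𝓝[>] x ≤ 𝓝[Icc 0 L] x := nhdsWithin_le_of_mem
      (mem_of_superset (Ico_mem_nhdsGT (hxv.trans_le hv.2)) fun s hs =>
        ⟨hu.1.trans (hxu.trans hs.1), hs.2.le⟩)
    have hx₀ : x ∈ Icc 0 L := ⟨hu.1.trans hxu, hxv.le.trans hv.2⟩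
    rcases (show Φ x ≤ x from hx).lt_or_eq with h | h
    · exact hnhds (((hΦ x hx₀).eventually_lt continuousWithinAt_id h).mono fun s hs => hs.le)
    · filter_upwards [hnhds (hloc x hx₀ h), self_mem_nhdsWithin] with s h₁ h₂
      exact h₁.trans_le (le_of_lt h₂)
  have hvL : v = L := le_antisymm hv.2 (hΦv ▸ hle (right_mem_Icc.2 huv))
  have huv' : u < v := huv.lt_of_ne fun h => hL.ne' (by rw [← hΦv, ← h, hΦu])
  have hnhds : 𝓝[<] v ≤ 𝓝[Icc 0 L] v := nhdsWithin_le_of_mem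
    (mem_of_superset (Ioo_mem_nhdsLT huv') fun s hs => ⟨hu.1.trans hs.1.le, hs.2.le.trans hv.2⟩)
  have hconst : ∀ᶠ s in 𝓝[<] v, Φ s = v := hnhds (hloc v hv (hvL ▸ hΦv))
  obtain ⟨s, h₁, h₂⟩ := (hconst.and (Ioo_mem_nhdsLT huv')).exists
  exact (hle ⟨h₂.1.le, h₂.2.le⟩ : Φ s ≤ s).not_gt (h₁ ▸ h₂.2)

/-- Along the itinerary `I`, the `n`-th iterate of `F` covers the arc of `P`, up to integer
translations, by the arc of `P₀`, with orientation `pos`. -/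
def CoversAlong (F : ℂ → ℂ) {p₀ q₀ p q : ℂ} (P₀ : ArcChart p₀ q₀) (P : ArcChart p q)
    (I : ℕ → Set ℂ) (n : ℕ) (pos : Bool) : Prop :=
  ∃ Φ K, CoordOrbit F P₀ P I n K Φ ∧ IccCover P₀.len P.len Φ pos

namespace CoversAlong

variable {F : ℂ → ℂ} {p₀ q₀ p q : ℂ} {P₀ : ArcChart p₀ q₀} {P : ArcChart p q}
  {I : ℕ → Set ℂ} {n : ℕ} {s : Bool}

lemma zero (F : ℂ → ℂ) (P₀ : ArcChart p₀ q₀) (I : ℕ → Set ℂ) : CoversAlong F P₀ P₀ I 0 true :=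
  ⟨id, 0, CoordOrbit.zero F P₀ I, 0, left_mem_Icc.2 P₀.len_pos.le, P₀.len,
    right_mem_Icc.2 P₀.len_pos.le, P₀.len_pos.le, rfl, rfl⟩

lemma succ (hF : DegMap 1 F) (h : CoversAlong F P₀ P I n s) (hI : I n = sHull {p, q})
    {p' q' : ℂ} {P' : ArcChart p' q'} {k : ℤ} {s' : Bool}
    (hcov : IccCover P.len P'.len (fun t => P'.ξ (F (P.γ t) - k)) s') :
    CoversAlong F P₀ P' I (n + 1) (s == s') := by
  obtain ⟨Φ, K, hΦ, hcov₀⟩ := h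
  exact ⟨_, _, hΦ.succ hF hI P' k, hcov₀.comp hΦ.continuousOn hcov⟩

lemma add_of_iccCover_self (hF : DegMap 1 F) (h : CoversAlong F P₀ P I n s) {k : ℤ}
    (hcov : IccCover P.len P.len (fun t => P.ξ (F (P.γ t) - k)) true) (m : ℕ)
    (hI : ∀ i, n ≤ i → i < n + m → I i = sHull {p, q}) : CoversAlong F P₀ P I (n + m) s := by
  induction m with
  | zero => exact h
  | succ m ih =>
    rw [← add_assoc]
    simpa using (ih fun i h₁ h₂ => hI i h₁ (by omega)).succ hF (hI (n + m) (by omega) (by omega))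
      hcov

lemma exists_periodic_point (h : CoversAlong F P P I n true) :
    ∃ z ∈ Sspace, ∃ K : ℤ, F^[n] z = z + K ∧ ∀ i < n, F^[i] z ∈ trZ (I i) := by
  obtain ⟨Φ, K, hΦ, hcov⟩ := h
  obtain ⟨t, ht, hfix, horb, hitin⟩ := exists_fixed_of_iccCover P.len_pos hΦ.continuousOn hcov
    fun t ht _ => hΦ.eventually_eq_or_orbit t ht
  exact ⟨P.γ t, P.γ_mem t ht, K, by rw [horb, hfix], hitin⟩

end CoversAlong

/-! ### Periodic orbits -/

lemma isPeriodicMod1_of_itinerary {F : ℂ → ℂ} (hF : DegMap 1 F) {K L : Set ℂ} {e : ℂ}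
    (he : e ∈ Sspace) (hsep : trZ K ∩ trZ L ⊆ trZ {e}) (hFe : F e ∉ trZ L) {z : ℂ}
    (hz : z ∈ Sspace) {n : ℕ} (hn : 3 ≤ n) {k : ℤ} (hper : F^[n] z = z + k)
    (hK : F z ∈ trZ K) (hL : ∀ i, 2 ≤ i → i < n → F^[i] z ∈ trZ L) : IsPeriodicMod1 F z n := by
  have hFz : F z ∉ trZ L := fun hFzL => by
    obtain ⟨j, hj⟩ := exists_eq_add_of_mem_trZ_singleton (hsep ⟨hK, hFzL⟩)
    have h₂ := hL 2 le_rfl (by omega)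
    rw [iterate_succ_apply', iterate_one, hj, hF.map_add_int he] at h₂
    exact hFe (add_int_mem_trZ_iff.1 h₂)
  have hshift : ∀ i (k' : ℤ), F^[i] z = z + k' → F^[i + 1] z = F z + k' := fun i k' h => by
    rw [iterate_succ_apply', h, hF.map_add_int hz]
  refine ⟨by omega, ⟨k, hper⟩, fun i hi₀ hin k' hk' => hFz ?_⟩
  rcases (by omega : i + 1 < n ∨ i + 1 = n) with hi | rfl
  · exact add_int_mem_trZ_iff.1 (hshift i k' hk' ▸ hL (i + 1) (by omega) hi)
  · have hFz' : F^[1] z = z + ↑(k - k') := by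
      rw [iterate_one, Int.cast_sub]
      linear_combination (hshift i k' hk').symm.trans hper
    exact add_int_mem_trZ_iff.1 (hshift 1 _ hFz' ▸ hL 2 le_rfl (by omega))

/-- Let `L = ⟨{a,b}⟩` and `K = ⟨{c,d}⟩` be oriented compact nondegenerate
intervals with `(K+ℤ) ∩ (L+ℤ) ⊆ {e}+ℤ` and `F(e) ∉ L+ℤ`. If `L` positively
`(F−k₁)`-covers `L`, `L` positively `(F−k₂)`-covers `K`, `K` negatively `(F−k₃)`-covers
`L` and `K` negatively `(F−k₄)`-covers `K`, then `Per(F) ⊇ ℕ∖{2}`. -/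
theorem statement15 (F : ℂ → ℂ) (hF : DegMap 1 F) (a b c d : ℂ)
    (ha : a ∈ Sspace) (hb : b ∈ Sspace) (hc : c ∈ Sspace) (hd : d ∈ Sspace)
    (hab : a ≠ b) (hcd : c ≠ d) (e : ℂ) (he : e ∈ Sspace)
    (hsep : trZ (sHull {c, d}) ∩ trZ (sHull {a, b}) ⊆ trZ {e})
    (hFe : F e ∉ trZ (sHull {a, b}))
    (k₁ k₂ k₃ k₄ : ℤ)
    (h1 : PosCovers (fun z => F z - (k₁ : ℂ)) a b a b)
    (h2 : PosCovers (fun z => F z - (k₂ : ℂ)) a b c d)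
    (h3 : NegCovers (fun z => F z - (k₃ : ℂ)) c d a b)
    (h4 : NegCovers (fun z => F z - (k₄ : ℂ)) c d c d) :
    {n : ℕ | 0 < n ∧ n ≠ 2} ⊆ PerSet F := by
  rintro n ⟨hn₀, hn₂⟩
  obtain ⟨PL⟩ := exists_arcChart ha hb hab
  obtain ⟨PK⟩ := exists_arcChart hc hd hcd
  rcases (by omega : n = 1 ∨ 3 ≤ n) with rfl | hn₃
  · obtain ⟨z, hz, k, hk, -⟩ := ((CoversAlong.zero F PL fun _ => sHull {a, b}).succ hF rfl
      (h1.iccCover PL PL)).exists_periodic_point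
    exact ⟨z, hz, one_pos, ⟨k, hk⟩, fun i hi₀ hi₁ => absurd hi₁ (by omega)⟩
  -- The loop `K → K → L → ⋯ → L → K` of length `n`.
  set I : ℕ → Set ℂ := fun i => if i ≤ 1 then sHull {c, d} else sHull {a, b}
  have hKL := ((CoversAlong.zero F PK I).succ hF rfl (h4.iccCover PK PK)).succ hF rfl
    (h3.iccCover PK PL)
  have hloop := (hKL.add_of_iccCover_self hF (h1.iccCover PL PL) (n - 3)
    fun i hi _ => if_neg (by omega)).succ hF (if_neg (by omega)) (h2.iccCover PL PK)
  rw [show 0 + 1 + 1 + (n - 3) + 1 = n by omega] at hloop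
  obtain ⟨z, hz, k, hk, hI⟩ := hloop.exists_periodic_point
  exact ⟨z, hz, isPeriodicMod1_of_itinerary hF he hsep hFe hz hn₃ hk
    (by simpa [I] using hI 1 (by omega))
    fun i hi hin => by simpa [I, show ¬ i ≤ 1 by omega] using hI i hin⟩

end
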